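/- (Lemma 1(ii)) Let i ∈ {1,…,n} be an index such that b_{i+1,n} = 0 (where i + 1 is read as 1 when i = n). Then for every j ∈ {1,…,n}, setting l = i + 1 − j + n·θ(j − i − 1), where θ is the Heaviside step function of a discrete variable (θ(x) = 1 if x ≥ 0 and θ(x) = 0 if x < 0), one has b_{j, k+l} = b_{i+1, k} for every integer k ≥ 1; that is, after a transient of length l, each sequence b_j coincides with the sequence b_{i+1}. -/

import Mathlib

/-!
STATEMENT 10 (Lemma 1(ii)). Let `i` be an index with `b_{i+1,n} = 0` (`i + 1`
wrapping around, as `Fin n` addition does). Then for every index `j`, setting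
`l = i + 1 − j + n·θ(j − i − 1)` with `θ` the Heaviside step function, one has
`b_{j,k+l} = b_{i+1,k}` for every integer `k ≥ 1`. (With 0-based `Fin n`
indices the paper's 1-based formula `l = (i+1) + 1 − (j+1) + n·θ((j+1) − (i+1) − 1)`
is literally `l = i + 1 − j + n·θ(j − i − 1)` in the 0-based values, computed
in `ℤ`; this quantity is always ≥ 1, and `Int.toNat` converts it to `ℕ`.)
-/

/-- The buffer sequence `(b_{i,j})_{j≥0}` built from `a`, starting cyclically at
index `i`: `b_{i,0} = 0`, `b_{i,j+1} = max{b_{i,j} + a_{σ_i(j+1)}, 0}` where the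
cyclic index `σ_i(j+1)` is `i + j` in `Fin n`. -/
noncomputable def bseq {n : ℕ} [NeZero n] (a : Fin n → ℝ) (i : Fin n) : ℕ → ℝ
  | 0 => 0
  | j + 1 => max (bseq a i j + a (i + Fin.ofNat n j)) 0

/-- Heaviside step function of a discrete (integer) variable:
`θ(x) = 1` if `x ≥ 0` and `θ(x) = 0` if `x < 0`. -/
def heaviside (x : ℤ) : ℤ := if 0 ≤ x then 1 else 0

/-
The recursion `b ↦ max (b + a_t) 0` is monotone in its starting value and forgets that value
once it reaches `0`. Since `j + l = i + 1` in `Fin n` with `l ≤ n`, the first `l` steps from `j`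
are the last `l` steps of the cycle from `i + 1`, which start from `b_{i+1,n-l} ≥ 0`; hence
`0 ≤ b_{j,l} ≤ b_{i+1,n} = 0`, and from then on `b_j` runs exactly as `b_{i+1}`.
-/

open Fin.NatCast

section

variable {n : ℕ} [NeZero n] (a : Fin n → ℝ)

lemma bseq_succ (x : Fin n) (k : ℕ) :
    bseq a x (k + 1) = max (bseq a x k + a (x + k)) 0 := rfl

lemma bseq_nonneg (x : Fin n) : ∀ k, 0 ≤ bseq a x k
  | 0 => le_rfl
  | _ + 1 => le_max_right _ _

lemma bseq_le_bseq_add (x : Fin n) (p : ℕ) :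
    ∀ q, bseq a (x + p) q ≤ bseq a x (p + q)
  | 0 => bseq_nonneg a x p
  | q + 1 => by
    rw [← add_assoc, bseq_succ, bseq_succ, Nat.cast_add, add_assoc]
    gcongr
    exact bseq_le_bseq_add x p q

lemma bseq_add_of_eq_zero {x : Fin n} {p : ℕ} (h : bseq a x p = 0) :
    ∀ q, bseq a x (p + q) = bseq a (x + p) q
  | 0 => h
  | q + 1 => by
    rw [← add_assoc, bseq_succ, bseq_succ, Nat.cast_add, add_assoc,
      bseq_add_of_eq_zero h q]

lemma bseq_le_bseq_of_add_eq {x y : Fin n} {l : ℕ} (hl : l ≤ n) (h : x + l = y) :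
    bseq a x l ≤ bseq a y n := by
  have hy : y + ((n - l : ℕ) : Fin n) = x := by
    rw [← h, add_assoc, ← Nat.cast_add, Nat.add_sub_cancel' hl, Fin.natCast_self, add_zero]
  calc bseq a x l = bseq a (y + ((n - l : ℕ) : Fin n)) l := by rw [hy]
    _ ≤ bseq a y (n - l + l) := bseq_le_bseq_add a y _ l
    _ = bseq a y n := by rw [Nat.sub_add_cancel hl]

end

def transientLength {n : ℕ} (i j : Fin n) : ℕ :=
  ((i.val : ℤ) + 1 - (j.val : ℤ) + (n : ℤ) * heaviside ((j.val : ℤ) - (i.val : ℤ) - 1)).toNat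

lemma transientLength_le {n : ℕ} (i j : Fin n) : transientLength i j ≤ n := by
  have := i.isLt
  unfold transientLength heaviside
  split_ifs <;> omega

lemma add_transientLength {n : ℕ} [NeZero n] (i j : Fin n) :
    j + (transientLength i j : Fin n) = i + 1 := by
  have := i.isLt
  ext
  simp only [Fin.val_add, Fin.val_natCast, Fin.val_one', Nat.add_mod_mod]
  unfold transientLength heaviside
  split_ifs with h
  · rw [show j.val + _ = n + (i.val + 1) by omega, Nat.add_mod_left]
  · congr 1; omega

theorem bseq_transient_coincides_general {n : ℕ} [NeZero n]
    (a : Fin n → ℝ) (i : Fin n)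
    (hb : bseq a (i + 1) n = 0) (j : Fin n) :
    ∀ k : ℕ, 1 ≤ k →
      bseq a j
        (k + ((i.val : ℤ) + 1 - (j.val : ℤ) +
          (n : ℤ) * heaviside ((j.val : ℤ) - (i.val : ℤ) - 1)).toNat) =
      bseq a (i + 1) k := by
  intro k _
  change bseq a j (k + transientLength i j) = _
  have hj : bseq a j (transientLength i j) = 0 :=
    le_antisymm
      (hb ▸ bseq_le_bseq_of_add_eq a (transientLength_le i j) (add_transientLength i j))
      (bseq_nonneg a j _)
  rw [add_comm, bseq_add_of_eq_zero a hj, add_transientLength]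

theorem bseq_transient_coincides {n : ℕ} [NeZero n] (hn : 2 ≤ n)
    (a : Fin n → ℝ) (ha : ∑ m, a m = 0) (i : Fin n)
    (hb : bseq a (i + 1) n = 0) (j : Fin n) :
    ∀ k : ℕ, 1 ≤ k →
      bseq a j
        (k + ((i.val : ℤ) + 1 - (j.val : ℤ) +
          (n : ℤ) * heaviside ((j.val : ℤ) - (i.val : ℤ) - 1)).toNat) =
      bseq a (i + 1) k :=
  bseq_transient_coincides_general a i hb j
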